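/- arXiv:1910.14674 — 2 statements merged into one kernel-verified Lean document; each statement's English description precedes it below -/
import Mathlib

section
/- The sum of the reciprocals of all twin primes converges; i.e., the series ∑_{p : p and p+2 both prime} (1/p + 1/(p+2)) converges, assuming the sieve bound π_2(x) ≤ C·x/(log x)² for all x ≥ 3. -/
/-!
Cut `ℕ` into the dyadic blocks `[2^k, 2^(k+1))`. If a set `P` of naturals has counting function
`O(x / (log x)^s)`, the reciprocals of its elements in the `k`-th block sum to at most
`#(P ∩ [0, 2^(k+1)]) / 2^k = O(1 / k^s)`, which is summable for `s > 1`. Twin primes have `s = 2`.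
-/

open Finset

theorem Finset.sum_range_two_pow_eq_add_sum_Ico {M : Type*} [AddCommMonoid M] (f : ℕ → M)
    (K : ℕ) :
    ∑ n ∈ range (2 ^ K), f n = f 0 + ∑ k ∈ range K, ∑ n ∈ Ico (2 ^ k) (2 ^ (k + 1)), f n := by
  induction K with
  | zero => simp
  | succ K ih =>
    rw [← sum_range_add_sum_Ico _ (Nat.pow_le_pow_right two_pos K.le_succ), ih, sum_range_succ,
      add_assoc]

theorem summable_of_summable_sum_Ico_two_pow {f : ℕ → ℝ} (hf : ∀ n, 0 ≤ f n)
    (h : Summable fun k ↦ ∑ n ∈ Ico (2 ^ k) (2 ^ (k + 1)), f n) : Summable f := by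
  refine summable_of_sum_range_le hf (c := f 0 + ∑' k, ∑ n ∈ Ico (2 ^ k) (2 ^ (k + 1)), f n)
    fun K ↦ ?_
  calc ∑ n ∈ range K, f n
      ≤ ∑ n ∈ range (2 ^ K), f n :=
        sum_le_sum_of_subset_of_nonneg (range_subset_range.mpr K.lt_two_pow_self.le)
          fun n _ _ ↦ hf n
    _ = f 0 + ∑ k ∈ range K, ∑ n ∈ Ico (2 ^ k) (2 ^ (k + 1)), f n :=
        sum_range_two_pow_eq_add_sum_Ico f K
    _ ≤ f 0 + ∑' k, ∑ n ∈ Ico (2 ^ k) (2 ^ (k + 1)), f n := by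
        gcongr
        exact h.sum_le_tsum _ fun k _ ↦ sum_nonneg fun n _ ↦ hf n

section CountingFunction

variable {P : ℕ → Prop} [DecidablePred P]

theorem sum_Ico_two_pow_ite_one_div_le (k : ℕ) :
    ∑ n ∈ Ico (2 ^ k) (2 ^ (k + 1)), (if P n then (1 : ℝ) / n else 0)
      ≤ #((Iic (2 ^ (k + 1))).filter P) / 2 ^ k := by
  have hterm : ∀ n ∈ (Ico (2 ^ k) (2 ^ (k + 1))).filter P, (1 : ℝ) / n ≤ 1 / 2 ^ k := by
    intro n hn
    have hn : (2 : ℝ) ^ k ≤ n := by exact_mod_cast (mem_Ico.mp (mem_filter.mp hn).1).1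
    exact one_div_le_one_div_of_le (by positivity) hn
  have hcard : #((Ico (2 ^ k) (2 ^ (k + 1))).filter P) ≤ #((Iic (2 ^ (k + 1))).filter P) :=
    card_le_card (filter_subset_filter P fun n hn ↦ mem_Iic.mpr (mem_Ico.mp hn).2.le)
  rw [← sum_filter, div_eq_mul_one_div]
  refine (sum_le_card_nsmul _ _ _ hterm).trans ?_
  rw [nsmul_eq_mul]
  gcongr

theorem summable_ite_one_div_of_card_filter_le {C s : ℝ} (hs : 1 < s)
    (h : ∀ n : ℕ, 3 ≤ n → (#((Iic n).filter P) : ℝ) ≤ C * n / Real.log n ^ s) :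
    Summable fun n ↦ if P n then (1 : ℝ) / n else 0 := by
  have hnonneg : ∀ n, 0 ≤ if P n then (1 : ℝ) / n else 0 := fun n ↦ by split_ifs <;> positivity
  -- The bound `h` starts at `n = 3`, so block `k + 1` is estimated through `n = 2^(k+2)`.
  refine summable_of_summable_sum_Ico_two_pow hnonneg ((summable_nat_add_iff 1).mp ?_)
  have hzeta : Summable fun k : ℕ ↦ 1 / ((k + 2 : ℕ) : ℝ) ^ s :=
    (summable_nat_add_iff 2).mpr (Real.summable_one_div_nat_rpow.mpr hs)
  refine (hzeta.mul_left (2 * C / Real.log 2 ^ s)).of_nonneg_of_le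
    (fun k ↦ sum_nonneg fun n _ ↦ hnonneg n) fun k ↦ ?_
  have hlog : Real.log ((2 ^ (k + 2) : ℕ) : ℝ) ^ s = ((k + 2 : ℕ) : ℝ) ^ s * Real.log 2 ^ s := by
    rw [Nat.cast_pow, Nat.cast_ofNat, Real.log_pow,
      Real.mul_rpow (Nat.cast_nonneg _) (Real.log_nonneg one_le_two)]
  have hcount := h (2 ^ (k + 2)) (by rw [pow_add]; have := k.one_le_two_pow; omega)
  rw [hlog] at hcount
  calc ∑ n ∈ Ico (2 ^ (k + 1)) (2 ^ (k + 1 + 1)), (if P n then (1 : ℝ) / n else 0)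
      ≤ #((Iic (2 ^ (k + 2))).filter P) / 2 ^ (k + 1) := sum_Ico_two_pow_ite_one_div_le (k + 1)
    _ ≤ C * ((2 ^ (k + 2) : ℕ) : ℝ) / (((k + 2 : ℕ) : ℝ) ^ s * Real.log 2 ^ s) / 2 ^ (k + 1) := by
        gcongr
    _ = 2 * C / Real.log 2 ^ s * (1 / ((k + 2 : ℕ) : ℝ) ^ s) := by
        push_cast
        field_simp
        ring

end CountingFunction

theorem brun_conditional_general
    (C : ℝ)
    (hbound : ∀ x : ℝ, 3 ≤ x →
      (((Finset.Iic ⌊x⌋₊).filter (fun p : ℕ => p.Prime ∧ (p + 2).Prime)).card : ℝ)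
        ≤ C * x / (Real.log x) ^ 2) :
    Summable (fun p : ℕ =>
      if p.Prime ∧ (p + 2).Prime then (1 : ℝ) / p + 1 / (p + 2) else 0) := by
  have hsummable : Summable fun p : ℕ ↦ if p.Prime ∧ (p + 2).Prime then (1 : ℝ) / p else 0 :=
    summable_ite_one_div_of_card_filter_le one_lt_two fun n hn ↦ by
      simpa [Real.rpow_two] using hbound n (by exact_mod_cast hn)
  refine (hsummable.mul_left 2).of_nonneg_of_le (fun p ↦ by split_ifs <;> positivity) fun p ↦ ?_
  split_ifs with htwin
  · have hp : (0 : ℝ) < p := by exact_mod_cast htwin.1.pos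
    have hle : (1 : ℝ) / (p + 2) ≤ 1 / p := one_div_le_one_div_of_le hp (by linarith)
    linarith
  · simp

theorem brun_conditional
    (C : ℝ) (hC : 0 < C)
    (hbound : ∀ x : ℝ, 3 ≤ x →
      (((Finset.Iic ⌊x⌋₊).filter (fun p : ℕ => p.Prime ∧ (p + 2).Prime)).card : ℝ)
        ≤ C * x / (Real.log x) ^ 2) :
    Summable (fun p : ℕ =>
      if p.Prime ∧ (p + 2).Prime then (1 : ℝ) / p + 1 / (p + 2) else 0) :=
  brun_conditional_general C hbound
end

section
/- Mean value theorem for Dirichlet polynomials: for any complex sequence (a_n) with |a_n| ≤ 1 and any T, N ≥ 1, ∫_T^{2T} |∑_{n ≤ N} a_n n^{−it}|² dt ≪ T·N + N², i.e., there is an absolute constant K such that the integral is at most K(TN + N²). -/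
/-!
Weight `|∑ aₙ n^{-it}|²` by a tent function of half-width `L = T + N` centred at `3T/2`, which is
at least `1/2` on `[T, 2T]`. Expanding the square bounds the weighted integral by
`∑_{m,n} |ŵ(log m - log n)|`, and the Fourier transform of the tent satisfies `|ŵ(ξ)| ≤ 2L` and
`|ŵ(ξ)| ≤ 4 / (L ξ²)`. The diagonal contributes `2LN`. Off the diagonal
`|log m - log n| ≥ |m - n| / N`, so each row contributes at most `(4N² / L) ∑_{k ≠ 0} k⁻²`, and
the `N` rows together `≪ N³ / L ≤ N²`. The quadratic decay of `ŵ` is essential: a sharp cutoff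
only gives `1 / |ξ|` and loses a factor `log N`.
-/

open Complex ComplexConjugate intervalIntegral

-- Negative outside `[c - L, c + L]`; it is only ever integrated over that interval.
noncomputable def tent (c L t : ℝ) : ℝ := 1 - |t - c| / L

section Tent

variable {c L : ℝ}

@[fun_prop]
lemma continuous_tent (c L : ℝ) : Continuous (tent c L) := by
  unfold tent
  fun_prop

lemma tent_nonneg (hL : 0 < L) {t : ℝ} (ht : t ∈ Set.Icc (c - L) (c + L)) : 0 ≤ tent c L t := by
  rw [tent, sub_nonneg, div_le_one hL]
  exact abs_le.2 ⟨by linarith [ht.1], by linarith [ht.2]⟩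

lemma tent_le_one (hL : 0 ≤ L) (t : ℝ) : tent c L t ≤ 1 := by
  rw [tent, sub_le_self_iff]
  positivity

lemma half_le_tent (hL : 0 < L) {t : ℝ} (ht : t ∈ Set.Icc (c - L / 2) (c + L / 2)) :
    1 / 2 ≤ tent c L t := by
  have : |t - c| ≤ L / 2 := abs_le.2 ⟨by linarith [ht.1], by linarith [ht.2]⟩
  rw [tent, le_sub_comm, div_le_iff₀ hL]
  linarith

lemma integral_le_two_mul_integral_tent_mul {F : ℝ → ℝ} (hF : Continuous F) (hF0 : ∀ t, 0 ≤ F t)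
    {a b : ℝ} (hab : a ≤ b) (hL : 0 < L) (ha : c - L / 2 ≤ a) (hb : b ≤ c + L / 2) :
    ∫ t in a..b, F t ≤ 2 * ∫ t in (c - L)..(c + L), tent c L t * F t := by
  have hcont : Continuous fun t => tent c L t * F t := by fun_prop
  calc ∫ t in a..b, F t ≤ ∫ t in a..b, 2 * (tent c L t * F t) := by
        refine integral_mono_on hab (hF.intervalIntegrable _ _)
          ((continuous_const.mul hcont).intervalIntegrable _ _) fun t ht => ?_
        have := half_le_tent hL ⟨ha.trans ht.1, ht.2.trans hb⟩
        nlinarith [hF0 t]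
    _ = 2 * ∫ t in a..b, tent c L t * F t := integral_const_mul _ _
    _ ≤ 2 * ∫ t in (c - L)..(c + L), tent c L t * F t := by
        gcongr
        refine integral_mono_interval (by linarith) hab (by linarith) ?_
          (hcont.intervalIntegrable _ _)
        refine (MeasureTheory.ae_restrict_mem measurableSet_Ioc).mono fun t ht => ?_
        exact mul_nonneg (tent_nonneg hL (Set.Ioc_subset_Icc_self ht)) (hF0 t)

lemma integral_affine_mul_cexp (p q : ℂ) {μ : ℂ} (hμ : μ ≠ 0) (a b : ℝ) :
    ∫ t in a..b, (p + q * t) * cexp (μ * t) =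
      (((p + q * b) * μ - q) * cexp (μ * b) - ((p + q * a) * μ - q) * cexp (μ * a)) / μ ^ 2 := by
  have hderiv : ∀ x : ℝ,
      HasDerivAt (fun t : ℝ => ((p + q * t) * μ - q) * cexp (μ * t) / μ ^ 2)
        ((p + q * x) * cexp (μ * x)) x := by
    intro x
    have hx : HasDerivAt (fun t : ℝ => (t : ℂ)) 1 x := (hasDerivAt_id x).ofReal_comp
    refine ((((hx.const_mul q).const_add p).mul_const μ).sub_const q |>.mul
      (hx.const_mul μ).cexp).div_const (μ ^ 2) |>.congr_deriv ?_
    field_simp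
    ring
  have hcont : Continuous fun t : ℝ => (p + q * t) * cexp (μ * t) := by fun_prop
  rw [integral_eq_sub_of_hasDerivAt (fun x _ => hderiv x) (hcont.intervalIntegrable _ _), sub_div]

lemma integral_tent_mul_cexp (hL : 0 < L) {μ : ℂ} (hμ : μ ≠ 0) :
    ∫ t in (c - L)..(c + L), (tent c L t : ℂ) * cexp (μ * t) =
      (cexp (μ * ↑(c - L)) + cexp (μ * ↑(c + L)) - 2 * cexp (μ * c)) / (L * μ ^ 2) := by
  have hcont : Continuous fun t : ℝ => (tent c L t : ℂ) * cexp (μ * t) := by fun_prop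
  have hleft : ∫ t in (c - L)..c, (tent c L t : ℂ) * cexp (μ * t) =
      ∫ t in (c - L)..c, ((1 - c / L : ℂ) + L⁻¹ * t) * cexp (μ * t) := by
    refine integral_congr fun t ht => ?_
    rw [Set.uIcc_of_le (by linarith)] at ht
    simp only [tent, abs_of_nonpos (sub_nonpos.2 ht.2)]
    push_cast
    ring
  have hright : ∫ t in c..(c + L), (tent c L t : ℂ) * cexp (μ * t) =
      ∫ t in c..(c + L), ((1 + c / L : ℂ) + (-L⁻¹) * t) * cexp (μ * t) := by
    refine integral_congr fun t ht => ?_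
    rw [Set.uIcc_of_le (by linarith)] at ht
    simp only [tent, abs_of_nonneg (sub_nonneg.2 ht.1)]
    push_cast
    ring
  have hL' : (L : ℂ) ≠ 0 := by exact_mod_cast hL.ne'
  rw [← integral_add_adjacent_intervals (b := c) (hcont.intervalIntegrable _ _)
    (hcont.intervalIntegrable _ _), hleft, hright, integral_affine_mul_cexp _ _ hμ,
    integral_affine_mul_cexp _ _ hμ]
  push_cast
  field_simp
  ring

lemma norm_integral_tent_mul_cexp_le (hL : 0 < L) {ξ : ℝ} (hξ : ξ ≠ 0) :
    ‖∫ t in (c - L)..(c + L), (tent c L t : ℂ) * cexp (I * ξ * t)‖ ≤ 4 / (L * ξ ^ 2) := by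
  have hμ : I * ξ ≠ 0 := mul_ne_zero I_ne_zero (by exact_mod_cast hξ)
  have hunit : ∀ x : ℝ, ‖cexp (I * ξ * x)‖ = 1 := fun x => by
    rw [norm_exp]
    simp
  have hden : ‖(L : ℂ) * (I * ξ) ^ 2‖ = L * ξ ^ 2 := by
    simp [abs_of_pos hL]
  rw [integral_tent_mul_cexp hL hμ, norm_div, hden]
  gcongr
  calc _ ≤ ‖cexp (I * ξ * ↑(c - L))‖ + ‖cexp (I * ξ * ↑(c + L))‖ + ‖2 * cexp (I * ξ * c)‖ :=
        norm_sub_le_of_le (norm_add_le _ _) le_rfl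
    _ = 4 := by
        rw [norm_mul, hunit, hunit, hunit]
        norm_num

lemma norm_integral_tent_mul_cexp_le_two_mul (hL : 0 < L) (ξ : ℝ) :
    ‖∫ t in (c - L)..(c + L), (tent c L t : ℂ) * cexp (I * ξ * t)‖ ≤ 2 * L := by
  have hbound : ∀ t ∈ Set.uIoc (c - L) (c + L), ‖(tent c L t : ℂ) * cexp (I * ξ * t)‖ ≤ 1 := by
    intro t ht
    rw [Set.uIoc_of_le (by linarith)] at ht
    rw [norm_mul, norm_real, Real.norm_of_nonneg (tent_nonneg hL (Set.Ioc_subset_Icc_self ht)),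
      norm_exp]
    simpa using tent_le_one hL.le t
  refine (norm_integral_le_of_norm_le_const hbound).trans_eq ?_
  rw [show c + L - (c - L) = 2 * L by ring, abs_of_pos (by linarith), one_mul]

end Tent

lemma hasSum_int_inv_sq : HasSum (fun k : ℤ => ((k : ℝ) ^ 2)⁻¹) (Real.pi ^ 2 / 3) := by
  have h := hasSum_zeta_two
  simp only [one_div] at h
  have h2 := h.of_nat_of_neg (f := fun k : ℤ => ((k : ℝ) ^ 2)⁻¹) (by simpa using h)
  rw [Int.cast_zero, zero_pow two_ne_zero, inv_zero, sub_zero] at h2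
  rwa [show Real.pi ^ 2 / 3 = Real.pi ^ 2 / 6 + Real.pi ^ 2 / 6 by ring]

-- At `n = m` the summand is `0⁻¹ = 0`.
lemma sum_inv_natCast_sub_sq_le (s : Finset ℕ) (m : ℕ) :
    ∑ n ∈ s, (((m : ℝ) - n) ^ 2)⁻¹ ≤ Real.pi ^ 2 / 3 := by
  have hinj : Set.InjOn (fun n : ℕ => (m : ℤ) - n) s := fun x _ y _ h => by simpa using h
  calc ∑ n ∈ s, (((m : ℝ) - n) ^ 2)⁻¹
      = ∑ k ∈ s.image fun n : ℕ => (m : ℤ) - n, ((k : ℝ) ^ 2)⁻¹ := by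
        rw [Finset.sum_image hinj]
        push_cast
        rfl
    _ ≤ Real.pi ^ 2 / 3 :=
        (hasSum_int_inv_sq.summable.sum_le_tsum _ fun _ _ => by positivity).trans_eq
          hasSum_int_inv_sq.tsum_eq

lemma abs_sub_le_mul_abs_log_sub_log {x y R : ℝ} (hx : 0 < x) (hy : 0 < y) (hxR : x ≤ R)
    (hyR : y ≤ R) : |x - y| ≤ R * |Real.log x - Real.log y| := by
  wlog hxy : x ≤ y generalizing x y
  · rw [abs_sub_comm, abs_sub_comm (Real.log x)]
    exact this hy hx hyR hxR (le_of_not_ge hxy)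
  have hlog : 1 - x / y ≤ Real.log y - Real.log x := by
    simpa [Real.log_div hy.ne' hx.ne'] using Real.one_sub_inv_le_log_of_pos (div_pos hy hx)
  rw [abs_sub_comm, abs_of_nonneg (sub_nonneg.2 hxy), abs_sub_comm,
    abs_of_nonneg (sub_nonneg.2 (Real.log_le_log hx hxy))]
  calc y - x = y * (1 - x / y) := by field_simp
    _ ≤ R * (Real.log y - Real.log x) := by
        gcongr
        · exact sub_nonneg.2 ((div_le_one hy).2 hxy)
        · linarith

lemma norm_sum_sq_eq_sum_sum {ι : Type*} (s : Finset ι) (z : ι → ℂ) :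
    ((‖∑ i ∈ s, z i‖ ^ 2 : ℝ) : ℂ) = ∑ i ∈ s, ∑ j ∈ s, z i * conj (z j) := by
  rw [ofReal_pow, ← mul_conj', map_sum, Finset.sum_mul_sum]

lemma integral_mul_norm_sum_cexp_sq_le {ι : Type*} (s : Finset ι) {a : ι → ℂ}
    (ha : ∀ i ∈ s, ‖a i‖ ≤ 1) (ξ : ι → ℝ) {w : ℝ → ℝ} (hw : Continuous w) (u v : ℝ) :
    ∫ t in u..v, w t * ‖∑ i ∈ s, a i * cexp (I * ξ i * t)‖ ^ 2 ≤
      ∑ i ∈ s, ∑ j ∈ s, ‖∫ t in u..v, (w t : ℂ) * cexp (I * ↑(ξ i - ξ j) * t)‖ := by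
  have hcross : ∀ i j (t : ℝ), a i * cexp (I * ξ i * t) * conj (a j * cexp (I * ξ j * t)) =
      a i * conj (a j) * cexp (I * ↑(ξ i - ξ j) * t) := by
    intro i j t
    rw [map_mul, ← exp_conj, mul_mul_mul_comm, ← exp_add]
    simp only [map_mul, conj_I, conj_ofReal]
    push_cast
    ring_nf
  have hexpand : ∀ t : ℝ, ((w t * ‖∑ i ∈ s, a i * cexp (I * ξ i * t)‖ ^ 2 : ℝ) : ℂ) =
      ∑ i ∈ s, ∑ j ∈ s, a i * conj (a j) * ((w t : ℂ) * cexp (I * ↑(ξ i - ξ j) * t)) := by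
    intro t
    simp only [ofReal_mul, norm_sum_sq_eq_sum_sum, Finset.mul_sum, hcross]
    exact Finset.sum_congr rfl fun i _ => Finset.sum_congr rfl fun j _ => by ring
  have hintegral : ((∫ t in u..v, w t * ‖∑ i ∈ s, a i * cexp (I * ξ i * t)‖ ^ 2 : ℝ) : ℂ) =
      ∑ i ∈ s, ∑ j ∈ s, a i * conj (a j) *
        ∫ t in u..v, (w t : ℂ) * cexp (I * ↑(ξ i - ξ j) * t) := by
    rw [← integral_ofReal, integral_congr fun t _ => hexpand t, integral_finsetSum]
    · refine Finset.sum_congr rfl fun i _ => ?_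
      rw [integral_finsetSum]
      · simp only [integral_const_mul]
      · exact fun j _ => (by fun_prop : Continuous _).intervalIntegrable _ _
    · exact fun i _ => (by fun_prop : Continuous _).intervalIntegrable _ _
  calc _ ≤ ‖((∫ t in u..v, w t * ‖∑ i ∈ s, a i * cexp (I * ξ i * t)‖ ^ 2 : ℝ) : ℂ)‖ := by
        rw [norm_real]
        exact Real.le_norm_self _
    _ ≤ _ := by
        rw [hintegral]
        refine (norm_sum_le _ _).trans (Finset.sum_le_sum fun i hi => ?_)
        refine (norm_sum_le _ _).trans (Finset.sum_le_sum fun j hj => ?_)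
        rw [norm_mul, norm_mul, RCLike.norm_conj]
        exact mul_le_of_le_one_left (norm_nonneg _)
          (mul_le_one₀ (ha i hi) (norm_nonneg _) (ha j hj))

lemma sum_sum_norm_integral_tent_mul_cexp_le {c L R : ℝ} (hL : 0 < L) (s : Finset ℕ)
    {ξ : ℕ → ℝ} (hξ : ∀ m ∈ s, ∀ n ∈ s, |(m : ℝ) - n| ≤ R * |ξ m - ξ n|) :
    ∑ m ∈ s, ∑ n ∈ s,
        ‖∫ t in (c - L)..(c + L), (tent c L t : ℂ) * cexp (I * ↑(ξ m - ξ n) * t)‖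
      ≤ s.card * (2 * L + 4 * R ^ 2 / L * (Real.pi ^ 2 / 3)) := by
  have hpair : ∀ m ∈ s, ∀ n ∈ s,
      ‖∫ t in (c - L)..(c + L), (tent c L t : ℂ) * cexp (I * ↑(ξ m - ξ n) * t)‖ ≤
        (if m = n then 2 * L else 0) + 4 * R ^ 2 / L * (((m : ℝ) - n) ^ 2)⁻¹ := by
    intro m hm n hn
    rcases eq_or_ne m n with rfl | hmn
    · rw [if_pos rfl, sub_self (m : ℝ), zero_pow two_ne_zero, inv_zero, mul_zero, add_zero]
      exact norm_integral_tent_mul_cexp_le_two_mul hL _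
    have hmn' : 0 < ((m : ℝ) - n) ^ 2 := by
      have : (m : ℝ) ≠ n := Nat.cast_injective.ne hmn
      positivity
    have hsq : ((m : ℝ) - n) ^ 2 ≤ R ^ 2 * (ξ m - ξ n) ^ 2 := by
      simpa only [mul_pow, sq_abs] using pow_le_pow_left₀ (abs_nonneg _) (hξ m hm n hn) 2
    have hξmn : ξ m - ξ n ≠ 0 := by
      rintro h
      rw [h] at hsq
      linarith
    rw [if_neg hmn, zero_add, ← div_eq_mul_inv, div_div]
    refine (norm_integral_tent_mul_cexp_le hL hξmn).trans ?_
    rw [div_le_div_iff₀ (by positivity) (by positivity)]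
    nlinarith
  calc _ ≤ ∑ m ∈ s, ∑ n ∈ s,
          ((if m = n then 2 * L else 0) + 4 * R ^ 2 / L * (((m : ℝ) - n) ^ 2)⁻¹) :=
        Finset.sum_le_sum fun m hm => Finset.sum_le_sum fun n hn => hpair m hm n hn
    _ = ∑ m ∈ s, (2 * L + 4 * R ^ 2 / L * ∑ n ∈ s, (((m : ℝ) - n) ^ 2)⁻¹) := by
        refine Finset.sum_congr rfl fun m hm => ?_
        rw [Finset.sum_add_distrib, Finset.sum_ite_eq, if_pos hm, Finset.mul_sum]
    _ ≤ ∑ m ∈ s, (2 * L + 4 * R ^ 2 / L * (Real.pi ^ 2 / 3)) := by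
        gcongr with m
        exact sum_inv_natCast_sub_sq_le s m
    _ = s.card * (2 * L + 4 * R ^ 2 / L * (Real.pi ^ 2 / 3)) := by
        rw [Finset.sum_const, nsmul_eq_mul]

lemma natCast_cpow_neg_mul_I {n : ℕ} (hn : n ≠ 0) (t : ℝ) :
    (n : ℂ) ^ (-(t : ℂ) * I) = cexp (I * ↑(-Real.log n) * t) := by
  rw [cpow_def_of_ne_zero (Nat.cast_ne_zero.2 hn), ← natCast_log]
  push_cast
  ring_nf

lemma abs_sub_le_mul_abs_neg_log_sub_neg_log {N m n : ℕ} (hm : m ∈ Finset.Icc 1 N)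
    (hn : n ∈ Finset.Icc 1 N) : |(m : ℝ) - n| ≤ N * |-Real.log m - -Real.log n| := by
  rw [Finset.mem_Icc] at hm hn
  rw [neg_sub_neg, abs_sub_comm (Real.log n)]
  exact abs_sub_le_mul_abs_log_sub_log (by exact_mod_cast hm.1) (by exact_mod_cast hn.1)
    (by exact_mod_cast hm.2) (by exact_mod_cast hn.2)

open Complex in
theorem mean_value_theorem_dirichlet_polynomials :
    ∃ K : ℝ, 0 < K ∧ ∀ (a : ℕ → ℂ) (T : ℝ) (N : ℕ), 1 ≤ T → 1 ≤ N →
      (∀ n, ‖a n‖ ≤ 1) →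
      (∫ t in T..(2 * T),
          ‖∑ n ∈ Finset.Icc 1 N, a n * (n : ℂ) ^ (-(t : ℂ) * Complex.I)‖ ^ 2)
        ≤ K * (T * N + (N : ℝ) ^ 2) := by
  refine ⟨32, by norm_num, fun a T N hT hN ha => ?_⟩
  have hN' : (1 : ℝ) ≤ N := by exact_mod_cast hN
  have hL : 0 < T + N := by positivity
  have hcexp : ∀ t : ℝ, ∑ n ∈ Finset.Icc 1 N, a n * (n : ℂ) ^ (-(t : ℂ) * I) =
      ∑ n ∈ Finset.Icc 1 N, a n * cexp (I * ↑(-Real.log n) * t) := fun t =>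
    Finset.sum_congr rfl fun n hn => by
      rw [natCast_cpow_neg_mul_I (Nat.one_le_iff_ne_zero.1 (Finset.mem_Icc.1 hn).1)]
  simp_rw [hcexp]
  calc _ ≤ 2 * ∫ t in (3 * T / 2 - (T + N))..(3 * T / 2 + (T + N)),
          tent (3 * T / 2) (T + N) t *
            ‖∑ n ∈ Finset.Icc 1 N, a n * cexp (I * ↑(-Real.log n) * t)‖ ^ 2 :=
        integral_le_two_mul_integral_tent_mul (by fun_prop) (fun _ => by positivity)
          (by linarith) hL (by linarith) (by linarith)
    _ ≤ 2 * ((Finset.Icc 1 N).card *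
          (2 * (T + N) + 4 * N ^ 2 / (T + N) * (Real.pi ^ 2 / 3))) := by
        gcongr
        exact (integral_mul_norm_sum_cexp_sq_le _ (fun n _ => ha n) _
          (continuous_tent _ _) _ _).trans (sum_sum_norm_integral_tent_mul_cexp_le hL _
            fun m hm n hn => abs_sub_le_mul_abs_neg_log_sub_neg_log hm hn)
    _ ≤ 32 * (T * N + N ^ 2) := by
        have hfrac : (N : ℝ) ^ 2 / (T + N) ≤ N := by
          rw [div_le_iff₀ hL]
          nlinarith
        have hpi : Real.pi ^ 2 ≤ 10 := by nlinarith [Real.pi_lt_d2, Real.pi_pos]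
        rw [Nat.card_Icc, add_tsub_cancel_right]
        calc _ = 4 * N * (T + N) + 8 / 3 * N * (Real.pi ^ 2 * (N ^ 2 / (T + N))) := by ring
          _ ≤ 4 * N * (T + N) + 8 / 3 * N * (10 * N) := by gcongr
          _ ≤ 32 * (T * N + N ^ 2) := by nlinarith
end
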